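/- arXiv:2112.11885 — 7 statements merged into one kernel-verified Lean document; each statement's English description precedes it below -/
import Mathlib

section
/- For pairwise disjoint measurable sets B_1,...,B_N and nonnegative integers d_1,...,d_N with d_1+...+d_N = n, integrating the tensor product of indicator functions 1_{B_1}^{⊗d_1} ⊗ ... ⊗ 1_{B_N}^{⊗d_N} against the n-th factorial measure η^(n) of a finite counting measure η yields the product of falling factorials (η(B_1))_{d_1} ⋯ (η(B_N))_{d_N}. -/
attribute [local instance] Classical.propDecidable

/-!
An injective `i : Fin n → Fin m` contributes `1` to the sum exactly when every coordinate `k` is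
sent to a point `x (i k)` of `B (c k)`. Since the `B j` are disjoint, such an `i` is the same as an
independent choice, for each block `j`, of an injection of the `d j` coordinates `{k | c k = j}`
into the points lying in `B j`; there are `(η (B j))_{d j}` of those.
-/

open Function

section BlockInjections

variable {α β ι : Type*} (c : α → ι) (S : ι → Set β)

abbrev BlockInjection : Type _ := {i : α → β // Injective i ∧ ∀ k, i k ∈ S (c k)}

def blockInjectionEquiv (hS : Pairwise (Disjoint on S)) :
    BlockInjection c S ≃ ∀ j, {k // c k = j} ↪ S j where
  toFun i j :=
    ⟨fun k => ⟨i.1 k, by obtain ⟨k, rfl⟩ := k; exact i.2.2 k⟩,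
      fun _ _ h => Subtype.ext (i.2.1 (congrArg Subtype.val h))⟩
  invFun f := by
    refine ⟨fun k => f (c k) ⟨k, rfl⟩, fun k k' h => ?_, fun k => (f (c k) ⟨k, rfl⟩).2⟩
    -- `f j` and `f (c k)` can only be compared after substituting `c k = j`
    have hval : ∀ j k (hk : c k = j), (f j ⟨k, hk⟩ : β) = f (c k) ⟨k, rfl⟩ := by
      rintro j k rfl; rfl
    have hck : c k' = c k := by
      by_contra hne
      refine Set.disjoint_left.mp (hS hne) (f (c k') ⟨k', rfl⟩).2 ?_
      simpa only [h] using (f (c k) ⟨k, rfl⟩).2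
    have : f (c k) ⟨k, rfl⟩ = f (c k) ⟨k', hck⟩ := Subtype.ext (h.trans (hval _ k' hck).symm)
    exact congrArg Subtype.val ((f (c k)).injective this)
  left_inv _ := rfl
  right_inv f := by
    funext j
    ext ⟨k, rfl⟩
    rfl

theorem card_blockInjection [Fintype ι] [Fintype (BlockInjection c S)] [∀ j, Fintype (S j)]
    [∀ j, Fintype {k // c k = j}] (hS : Pairwise (Disjoint on S)) :
    Fintype.card (BlockInjection c S) =
      ∏ j, (Fintype.card (S j)).descFactorial (Fintype.card {k // c k = j}) := by
  rw [Fintype.card_congr (blockInjectionEquiv c S hS), Fintype.card_pi]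
  simp only [Fintype.card_embedding_eq]

theorem sum_injective_prod_indicator [DecidableEq α] [DecidableEq β] [Fintype α] [Fintype β]
    [Fintype (BlockInjection c S)] {R : Type*} [CommSemiring R] :
    ∑ i ∈ Finset.univ.filter (fun i : α → β => Injective i),
        ∏ k, (if i k ∈ S (c k) then (1 : R) else 0) = Fintype.card (BlockInjection c S) := by
  simp only [Finset.prod_boole, Finset.sum_boole, Finset.filter_filter, Finset.mem_univ,
    true_implies, Fintype.card_subtype]

end BlockInjections

theorem stmt1_general {E : Type*} {m n N : ℕ}
    (x : Fin m → E) (B : Fin N → Set E)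
    (hdisj : Pairwise (fun i j => Disjoint (B i) (B j)))
    (d : Fin N → ℕ)
    (c : Fin n → Fin N) (hc : ∀ j, (Finset.univ.filter (fun k => c k = j)).card = d j) :
    ∑ i ∈ Finset.univ.filter (fun i : Fin n → Fin m => Function.Injective i),
        ∏ k : Fin n, (if x (i k) ∈ B (c k) then (1 : ℝ) else 0)
      = ∏ j : Fin N,
          (((Finset.univ.filter (fun l : Fin m => x l ∈ B j)).card).descFactorial (d j) : ℝ) := by
  have hS : Pairwise (Disjoint on fun j => x ⁻¹' B j) := fun i j h => (hdisj h).preimage x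
  calc _ = (Fintype.card (BlockInjection c fun j => x ⁻¹' B j) : ℝ) :=
        sum_injective_prod_indicator c _
    _ = _ := by
      rw [card_blockInjection c _ hS, Nat.cast_prod]
      refine Finset.prod_congr rfl fun j _ => ?_
      rw [Fintype.card_subtype, Fintype.card_subtype, hc]
      rfl

/-- For pairwise disjoint measurable sets `B 1, …, B N` and nonnegative integers
`d j` with `∑ d j = n`, integrating the tensor product `1_{B 1}^{⊗ d 1} ⊗ ⋯ ⊗ 1_{B N}^{⊗ d N}`
(encoded via an assignment `c : Fin n → Fin N` of coordinates to blocks, the `j`-th block having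
`d j` coordinates) against the `n`-th factorial measure of the finite counting measure
`η = δ_{x 0} + ⋯ + δ_{x (m-1)}` yields the product of falling factorials
`(η (B 1))_{d 1} ⋯ (η (B N))_{d N}`. -/
theorem stmt1 {E : Type*} [MeasurableSpace E] {m n N : ℕ}
    (x : Fin m → E) (B : Fin N → Set E)
    (hmeas : ∀ j, MeasurableSet (B j))
    (hdisj : Pairwise (fun i j => Disjoint (B i) (B j)))
    (d : Fin N → ℕ) (hsum : ∑ j, d j = n)
    (c : Fin n → Fin N) (hc : ∀ j, (Finset.univ.filter (fun k => c k = j)).card = d j) :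
    ∑ i ∈ Finset.univ.filter (fun i : Fin n → Fin m => Function.Injective i),
        ∏ k : Fin n, (if x (i k) ∈ B (c k) then (1 : ℝ) else 0)
      = ∏ j : Fin N,
          (((Finset.univ.filter (fun l : Fin m => x l ∈ B j)).card).descFactorial (d j) : ℝ) :=
  stmt1_general x B hdisj d c hc
end

section
/- The monic Charlier polynomial 𝒞_n(x; α) = Σ_{k=0}^n C(n,k) (-α)^{n-k} (x)_k satisfies the orthogonality relation Σ_{ℓ=0}^∞ 𝒞_n(ℓ; α) 𝒞_m(ℓ; α) e^{-α} α^ℓ/ℓ! = 1{n=m} · α^n · n! for all n, m ∈ ℕ and α > 0. -/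
/-- The monic Charlier polynomial `𝒞_n(x; α) = ∑_{k=0}^n C(n,k) (-α)^{n-k} (x)_k`. -/
noncomputable def charlier (n : ℕ) (α : ℝ) (x : ℕ) : ℝ :=
  ∑ k ∈ Finset.range (n + 1),
    (n.choose k : ℝ) * (-α) ^ (n - k) * (x.descFactorial k : ℝ)

/-!
Write `E` for summation against the Poisson weights `e^{-α} α^ℓ / ℓ!`. Shifting the summation
index gives `E[(X)_k g(X)] = α^k E[g(X + k)]`, and Vandermonde's identity for falling factorials
then gives `E[(X + j)_k] = ∑_a C(k,a) α^{k-a} (j)_a`. The coefficients of `𝒞_m` are exactly those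
of the inverse of this binomial transform, so `E[𝒞_m(X + j)] = (j)_m`, hence
`E[(X)_j 𝒞_m(X)] = α^j (j)_m`. Expanding `𝒞_n` in falling factorials and inverting once more,
now applied to `a ↦ 1{a = m} α^a a!`, yields the orthogonality relation.
-/

open Finset

theorem Nat.add_descFactorial_eq_sum_choose (m n k : ℕ) :
    (m + n).descFactorial k
      = ∑ a ∈ range (k + 1), k.choose a * m.descFactorial a * n.descFactorial (k - a) := by
  rw [descFactorial_eq_factorial_mul_choose, add_choose_eq, mul_sum,
    Nat.sum_antidiagonal_eq_sum_range_succ_mk]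
  refine sum_congr rfl fun a ha => ?_
  rw [descFactorial_eq_factorial_mul_choose m, descFactorial_eq_factorial_mul_choose n,
    ← choose_mul_factorial_mul_factorial (mem_range_succ_iff.mp ha)]
  ring

theorem sum_Ico_choose_mul_choose_mul_pow {R : Type*} [CommSemiring R] (x y : R) {a m : ℕ}
    (h : a ≤ m) :
    ∑ k ∈ Ico a (m + 1), (m.choose k * k.choose a : R) * x ^ (m - k) * y ^ (k - a)
      = m.choose a * (x + y) ^ (m - a) := by
  rw [sum_Ico_eq_sum_range, show m + 1 - a = m - a + 1 by omega, add_comm x, add_pow, mul_sum]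
  refine sum_congr rfl fun t ht => ?_
  have ht : t ≤ m - a := mem_range_succ_iff.mp ht
  rw [← Nat.cast_mul, Nat.choose_mul (Nat.le_add_right a t), Nat.add_sub_cancel_left,
    show m - (a + t) = m - a - t by omega]
  push_cast
  ring

theorem sum_choose_mul_pow_mul_sum_choose_mul_pow {R : Type*} [CommSemiring R] (x y : R)
    (z : ℕ → R) (m : ℕ) :
    ∑ k ∈ range (m + 1), (m.choose k : R) * x ^ (m - k) *
        ∑ a ∈ range (k + 1), (k.choose a : R) * y ^ (k - a) * z a
      = ∑ a ∈ range (m + 1), (m.choose a : R) * (x + y) ^ (m - a) * z a := by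
  simp_rw [mul_sum, ← Nat.Ico_zero_eq_range]
  rw [← sum_Ico_Ico_comm 0 (m + 1) fun a k => (m.choose k : R) * x ^ (m - k) *
    ((k.choose a : R) * y ^ (k - a) * z a)]
  refine sum_congr rfl fun a ha => ?_
  rw [← sum_Ico_choose_mul_choose_mul_pow x y (Nat.lt_succ_iff.mp (mem_Ico.mp ha).2),
    sum_mul]
  exact sum_congr rfl fun k _ => by ring

theorem sum_choose_mul_neg_pow_mul_sum_choose_mul_pow {R : Type*} [CommRing R] (y : R)
    (z : ℕ → R) (m : ℕ) :
    ∑ k ∈ range (m + 1), (m.choose k : R) * (-y) ^ (m - k) *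
        ∑ a ∈ range (k + 1), (k.choose a : R) * y ^ (k - a) * z a = z m := by
  rw [sum_choose_mul_pow_mul_sum_choose_mul_pow, neg_add_cancel, sum_range_succ,
    sum_eq_zero fun a ha => ?_]
  · simp
  · simp [zero_pow (Nat.sub_ne_zero_of_lt (mem_range.mp ha))]

noncomputable def poissonWeight (α : ℝ) (ℓ : ℕ) : ℝ :=
  Real.exp (-α) * α ^ ℓ / ℓ.factorial

theorem hasSum_poissonWeight (α : ℝ) : HasSum (poissonWeight α) 1 := by
  have h := (NormedSpace.expSeries_div_hasSum_exp α).mul_left (Real.exp (-α))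
  rw [← Real.exp_eq_exp_ℝ, ← Real.exp_add, neg_add_cancel, Real.exp_zero] at h
  unfold poissonWeight
  simpa only [mul_div_assoc] using h

theorem add_descFactorial_mul_poissonWeight (α : ℝ) (s k : ℕ) :
    ((s + k).descFactorial k : ℝ) * poissonWeight α (s + k) =
      α ^ k * poissonWeight α s := by
  have h := Nat.factorial_mul_descFactorial (Nat.le_add_left k s)
  rw [Nat.add_sub_cancel] at h
  rw [poissonWeight, poissonWeight, ← h, pow_add]
  push_cast
  field_simp

theorem HasSum.descFactorial_mul_poissonWeight {α a : ℝ} {k : ℕ} {g : ℕ → ℝ}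
    (h : HasSum (fun s => g (s + k) * poissonWeight α s) a) :
    HasSum (fun ℓ => (ℓ.descFactorial k : ℝ) * g ℓ * poissonWeight α ℓ) (α ^ k * a) := by
  have hvanish : ∀ ℓ ∉ Set.range (· + k),
      (ℓ.descFactorial k : ℝ) * g ℓ * poissonWeight α ℓ = 0 := by
    intro ℓ hℓ
    have hlt : ℓ < k := by
      by_contra hge
      exact hℓ ⟨ℓ - k, Nat.sub_add_cancel (not_lt.mp hge)⟩
    rw [Nat.descFactorial_eq_zero_iff_lt.mpr hlt, Nat.cast_zero, zero_mul, zero_mul]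
  rw [← (add_left_injective k).hasSum_iff hvanish]
  have hshift : (fun ℓ => (ℓ.descFactorial k : ℝ) * g ℓ * poissonWeight α ℓ) ∘ (· + k)
      = fun s => α ^ k * (g (s + k) * poissonWeight α s) := by
    funext s
    rw [Function.comp_apply, mul_right_comm, add_descFactorial_mul_poissonWeight]
    ring
  rw [hshift]
  exact h.mul_left _

theorem hasSum_descFactorial_mul_poissonWeight (α : ℝ) (k : ℕ) :
    HasSum (fun ℓ => (ℓ.descFactorial k : ℝ) * poissonWeight α ℓ) (α ^ k) := by
  have h := HasSum.descFactorial_mul_poissonWeight (g := fun _ => 1) (k := k)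
    (by simpa using hasSum_poissonWeight α)
  simpa using h

theorem hasSum_add_descFactorial_mul_poissonWeight (α : ℝ) (j k : ℕ) :
    HasSum (fun s => ((s + j).descFactorial k : ℝ) * poissonWeight α s)
      (∑ a ∈ range (k + 1), (k.choose a : ℝ) * α ^ (k - a) * j.descFactorial a) := by
  have hexpand : (fun s => ((s + j).descFactorial k : ℝ) * poissonWeight α s) = fun s =>
      ∑ a ∈ range (k + 1), (k.choose a * j.descFactorial a : ℝ) *
        (s.descFactorial (k - a) * poissonWeight α s) := by
    funext s
    rw [add_comm, Nat.add_descFactorial_eq_sum_choose]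
    push_cast
    rw [sum_mul]
    exact sum_congr rfl fun a _ => by ring
  have hvalue : ∑ a ∈ range (k + 1), (k.choose a : ℝ) * α ^ (k - a) * j.descFactorial a
      = ∑ a ∈ range (k + 1), (k.choose a * j.descFactorial a : ℝ) * α ^ (k - a) :=
    sum_congr rfl fun a _ => by ring
  rw [hexpand, hvalue]
  exact hasSum_sum fun a _ => (hasSum_descFactorial_mul_poissonWeight α (k - a)).mul_left _

theorem hasSum_charlier_add_mul_poissonWeight (α : ℝ) (m j : ℕ) :
    HasSum (fun s => charlier m α (s + j) * poissonWeight α s) (j.descFactorial m) := by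
  have h := hasSum_sum fun k (_ : k ∈ range (m + 1)) =>
    (hasSum_add_descFactorial_mul_poissonWeight α j k).mul_left
      ((m.choose k : ℝ) * (-α) ^ (m - k))
  rw [sum_choose_mul_neg_pow_mul_sum_choose_mul_pow] at h
  simp_rw [charlier, sum_mul]
  simpa only [mul_assoc] using h

theorem hasSum_descFactorial_mul_charlier_mul_poissonWeight (α : ℝ) (j m : ℕ) :
    HasSum (fun ℓ => (ℓ.descFactorial j : ℝ) * charlier m α ℓ * poissonWeight α ℓ)
      (α ^ j * j.descFactorial m) :=
  (hasSum_charlier_add_mul_poissonWeight α m j).descFactorial_mul_poissonWeight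

theorem pow_mul_descFactorial_eq_sum_choose {R : Type*} [CommSemiring R] (y : R) (j m : ℕ) :
    y ^ j * j.descFactorial m = ∑ a ∈ range (j + 1),
      (j.choose a : R) * y ^ (j - a) * if a = m then y ^ a * a.factorial else 0 := by
  simp only [mul_ite, mul_zero, sum_ite_eq', mem_range_succ_iff]
  split_ifs with hmj
  · rw [Nat.descFactorial_eq_factorial_mul_choose, ← pow_sub_mul_pow y hmj]
    push_cast
    ring
  · rw [Nat.descFactorial_eq_zero_iff_lt.mpr (not_le.mp hmj), Nat.cast_zero, mul_zero]

theorem hasSum_charlier_mul_charlier_mul_poissonWeight (α : ℝ) (n m : ℕ) :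
    HasSum (fun ℓ => charlier n α ℓ * charlier m α ℓ * poissonWeight α ℓ)
      (if n = m then α ^ n * n.factorial else 0) := by
  have h := hasSum_sum fun j (_ : j ∈ range (n + 1)) =>
    (hasSum_descFactorial_mul_charlier_mul_poissonWeight α j m).mul_left
      ((n.choose j : ℝ) * (-α) ^ (n - j))
  simp_rw [pow_mul_descFactorial_eq_sum_choose] at h
  rw [sum_choose_mul_neg_pow_mul_sum_choose_mul_pow] at h
  have hexpand : ∀ ℓ, charlier n α ℓ * charlier m α ℓ * poissonWeight α ℓ =
      ∑ j ∈ range (n + 1), (n.choose j : ℝ) * (-α) ^ (n - j) *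
        (ℓ.descFactorial j * charlier m α ℓ * poissonWeight α ℓ) := by
    intro ℓ
    rw [charlier, sum_mul, sum_mul]
    exact sum_congr rfl fun j _ => by ring
  simp_rw [hexpand]
  exact h

theorem stmt2_general (α : ℝ) (n m : ℕ) :
    ∑' ℓ : ℕ, charlier n α ℓ * charlier m α ℓ *
        (Real.exp (-α) * α ^ ℓ / (ℓ.factorial : ℝ))
      = if n = m then α ^ n * (n.factorial : ℝ) else 0 :=
  (hasSum_charlier_mul_charlier_mul_poissonWeight α n m).tsum_eq

/-- orthogonality of the monic Charlier polynomials with respect to the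
Poisson distribution: `∑_ℓ 𝒞_n(ℓ;α) 𝒞_m(ℓ;α) e^{-α} α^ℓ/ℓ! = 1{n=m} α^n n!`. -/
theorem stmt2 (α : ℝ) (hα : 0 < α) (n m : ℕ) :
    ∑' ℓ : ℕ, charlier n α ℓ * charlier m α ℓ *
        (Real.exp (-α) * α ^ ℓ / (ℓ.factorial : ℝ))
      = if n = m then α ^ n * (n.factorial : ℝ) else 0 :=
  stmt2_general α n m
end

section
/- The monic Meixner polynomials 𝒮_n(x; a; p) := Σ_{k=0}^n C(n,k) (1 - 1/p)^{k-n} (a+k)^{(n-k)} (x)_k satisfy the orthogonality relation Σ_{ℓ=0}^∞ 𝒮_n(ℓ; a; p) 𝒮_m(ℓ; a; p) NB(a,p)({ℓ}) = 1{n=m} · p^n n! (a)^{(n)} / (1-p)^{2n}, where NB(a,p)({ℓ}) = (a)^{(ℓ)} p^ℓ (1-p)^a / ℓ!. -/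
/-!
The weights `w_a(ℓ) = (a)^{(ℓ)} p^ℓ (1-p)^a / ℓ!` of `NB(a,p)` sum to one by the negative binomial
series, and satisfy `(ℓ+1) w_a(ℓ+1) = p (a+ℓ) w_a(ℓ)` and `(a+ℓ) w_a(ℓ) = a/(1-p) w_{a+1}(ℓ)`.
Combined with the raising relation `(1-p) 𝒮_{n+1}(x;a) = x 𝒮_n(x-1;a+1) - p (a+x) 𝒮_n(x;a+1)`,
a summation by parts gives
`∑ 𝒮_{n+1}(ℓ;a) (ℓ)_j w_a(ℓ) = p a j / (1-p)² · ∑ 𝒮_n(ℓ;a+1) (ℓ)_{j-1} w_{a+1}(ℓ)`,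
so by induction on `n` the moment `∑ 𝒮_n(ℓ;a) (ℓ)_j w_a(ℓ)` vanishes for `j < n` and equals
`p^n n! (a)^{(n)} / (1-p)^{2n}` for `j = n`. Expanding the monic `𝒮_m`, `m ≤ n`, in falling
factorials then gives the orthogonality relation.
-/

/-- Rising factorial (Pochhammer symbol) `(a)^{(k)} = a(a+1)⋯(a+k-1)`. -/
noncomputable def risingFact (a : ℝ) (k : ℕ) : ℝ := ∏ i ∈ Finset.range k, (a + i)

/-- The monic Meixner polynomial
`𝒮_n(x;a;p) = ∑_{k=0}^n C(n,k) (1-1/p)^{k-n} (a+k)^{(n-k)} (x)_k`. -/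
noncomputable def meixner (n : ℕ) (a p : ℝ) (x : ℕ) : ℝ :=
  ∑ k ∈ Finset.range (n + 1),
    (n.choose k : ℝ) * (1 - 1 / p) ^ ((k : ℤ) - (n : ℤ)) *
      risingFact (a + k) (n - k) * (x.descFactorial k : ℝ)

open Finset Filter Asymptotics

@[simp]
lemma risingFact_zero (a : ℝ) : risingFact a 0 = 1 := by simp [risingFact]

lemma risingFact_succ (a : ℝ) (k : ℕ) : risingFact a (k + 1) = risingFact a k * (a + k) :=
  prod_range_succ _ k

lemma risingFact_succ' (a : ℝ) (k : ℕ) : risingFact a (k + 1) = a * risingFact (a + 1) k := by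
  rw [risingFact, prod_range_succ', risingFact, mul_comm]
  congr 1
  · simp
  · refine prod_congr rfl fun i _ => ?_
    push_cast
    ring

lemma risingFact_eq_ascPochhammer_eval (a : ℝ) (k : ℕ) :
    risingFact a k = (ascPochhammer ℝ k).eval a := by
  induction k with
  | zero => simp
  | succ k ih => rw [risingFact_succ, ih, ascPochhammer_succ_eval]

lemma Ring.choose_add_sub_one_eq_risingFact_div (a : ℝ) (n : ℕ) :
    Ring.choose (a + n - 1) n = risingFact a n / n.factorial := by
  rw [← Ring.multichoose_eq, eq_div_iff (by positivity), mul_comm, ← nsmul_eq_mul,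
    Ring.factorial_nsmul_multichoose_eq_ascPochhammer, Polynomial.ascPochhammer_smeval_eq_eval,
    risingFact_eq_ascPochhammer_eval]

lemma hasSum_risingFact_div_factorial_mul_pow (a : ℝ) {x : ℝ} (hx : |x| < 1) :
    HasSum (fun n => risingFact a n / n.factorial * x ^ n) (1 / (1 - x) ^ a) := by
  have hball : x ∈ Metric.eball (0 : ℝ) 1 := by
    simpa [Metric.eball, edist_dist, ENNReal.ofReal_lt_one] using hx
  simpa [FormalMultilinearSeries.ofScalars_apply_eq, Ring.choose_add_sub_one_eq_risingFact_div,
    mul_comm] using (Real.one_div_one_sub_rpow_hasFPowerSeriesOnBall_zero a).hasSum hball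

noncomputable def nbWeight (a p : ℝ) (ℓ : ℕ) : ℝ :=
  risingFact a ℓ * p ^ ℓ * (1 - p) ^ a / ℓ.factorial

section nbWeight

variable {p : ℝ}

lemma hasSum_nbWeight (a : ℝ) (hp : |p| < 1) : HasSum (nbWeight a p) 1 := by
  have hpos : 0 < (1 - p) ^ a := Real.rpow_pos_of_pos (by linarith [le_abs_self p]) a
  have h := (hasSum_risingFact_div_factorial_mul_pow a hp).mul_left ((1 - p) ^ a)
  rw [mul_one_div_cancel hpos.ne'] at h
  refine h.congr_fun fun ℓ => ?_
  simp only [nbWeight]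
  ring

lemma succ_mul_nbWeight_succ (a p : ℝ) (ℓ : ℕ) :
    (ℓ + 1) * nbWeight a p (ℓ + 1) = p * (a + ℓ) * nbWeight a p ℓ := by
  simp only [nbWeight, risingFact_succ, Nat.factorial_succ, Nat.cast_mul, pow_succ]
  field_simp
  push_cast
  ring

lemma add_mul_nbWeight (a : ℝ) (hp : p ≠ 1) (ℓ : ℕ) :
    (a + ℓ) * nbWeight a p ℓ = a / (1 - p) * nbWeight (a + 1) p ℓ := by
  have hp' : 1 - p ≠ 0 := sub_ne_zero.2 hp.symm
  have h := risingFact_succ a ℓ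
  rw [risingFact_succ'] at h
  simp only [nbWeight, Real.rpow_add_one hp']
  field_simp
  linear_combination -(p ^ ℓ * (1 - p) ^ a) * h

/-- The weights are dominated by `(p/r)^ℓ` for any `r ∈ (|p|, 1)`, because the terms of the
series `hasSum_risingFact_div_factorial_mul_pow` at `r` are bounded. -/
lemma summable_mul_nbWeight {f : ℕ → ℝ} {d : ℕ} (hf : f =O[atTop] fun ℓ => (ℓ : ℝ) ^ d)
    (a : ℝ) (hp : |p| < 1) : Summable fun ℓ => f ℓ * nbWeight a p ℓ := by
  obtain ⟨r, hpr, hr1⟩ := exists_between hp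
  have hr0 : 0 < r := (abs_nonneg p).trans_lt hpr
  have hcoeff : (fun ℓ => risingFact a ℓ / ℓ.factorial * r ^ ℓ) =O[atTop] fun _ => (1 : ℝ) :=
    ((hasSum_risingFact_div_factorial_mul_pow a (by rwa [abs_of_pos hr0])).summable
      |>.tendsto_atTop_zero).isBigO_one ℝ
  have hgeom : Summable fun ℓ : ℕ => (ℓ : ℝ) ^ d * (p / r) ^ ℓ :=
    summable_pow_mul_geometric_of_norm_lt_one d <| by
      rwa [norm_div, Real.norm_eq_abs, Real.norm_eq_abs, abs_of_pos hr0, div_lt_one hr0]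
  refine summable_of_isBigO_nat (hgeom.mul_right ((1 - p) ^ a)) ?_
  refine ((hf.mul hcoeff).mul (isBigO_refl (fun ℓ : ℕ => (p / r) ^ ℓ * (1 - p) ^ a) atTop))
    |>.congr (fun ℓ => ?_) (fun ℓ => by ring)
  rw [nbWeight, div_pow]
  field_simp

end nbWeight

lemma Nat.cast_descFactorial_succ (x k : ℕ) :
    (x.descFactorial (k + 1) : ℝ) = (x - k) * x.descFactorial k := by
  rcases le_or_gt k x with h | h
  · rw [Nat.descFactorial_succ, Nat.cast_mul, Nat.cast_sub h]
  · simp [Nat.descFactorial_eq_zero_iff_lt.2 h]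

lemma Nat.cast_mul_descFactorial_sub_one (x k : ℕ) :
    (x : ℝ) * (x - 1).descFactorial k = x.descFactorial (k + 1) := by
  cases x with
  | zero => simp
  | succ x =>
    rw [Nat.succ_descFactorial_succ, Nat.add_sub_cancel]
    push_cast
    ring

lemma Nat.cast_succ_descFactorial (x j : ℕ) :
    ((x + 1).descFactorial j : ℝ) = x.descFactorial j + j * x.descFactorial (j - 1) := by
  cases j with
  | zero => simp
  | succ j =>
    rw [Nat.succ_descFactorial_succ, Nat.cast_descFactorial_succ, Nat.add_sub_cancel]
    push_cast
    ring

lemma Nat.cast_descFactorial_le_pow (x k : ℕ) : (x.descFactorial k : ℝ) ≤ (x : ℝ) ^ k := by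
  exact_mod_cast Nat.descFactorial_le_pow x k

lemma isBigO_descFactorial (j : ℕ) :
    (fun ℓ : ℕ => (ℓ.descFactorial j : ℝ)) =O[atTop] fun ℓ => (ℓ : ℝ) ^ j :=
  IsBigO.of_bound 1 <| Eventually.of_forall fun ℓ => by
    rw [one_mul, Real.norm_of_nonneg (by positivity), Real.norm_of_nonneg (by positivity)]
    exact Nat.cast_descFactorial_le_pow ℓ j

noncomputable def meixnerCoeff (n : ℕ) (a p : ℝ) (k : ℕ) : ℝ :=
  n.choose k * (1 - 1 / p) ^ ((k : ℤ) - n) * risingFact (a + k) (n - k)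

lemma meixner_eq_sum_meixnerCoeff (n : ℕ) (a p : ℝ) (x : ℕ) :
    meixner n a p x = ∑ k ∈ range (n + 1), meixnerCoeff n a p k * x.descFactorial k :=
  rfl

lemma meixnerCoeff_self (n : ℕ) (a p : ℝ) : meixnerCoeff n a p n = 1 := by
  simp [meixnerCoeff]

lemma meixnerCoeff_of_lt {n k : ℕ} (h : n < k) (a p : ℝ) : meixnerCoeff n a p k = 0 := by
  simp [meixnerCoeff, Nat.choose_eq_zero_of_lt h]

@[simp]
lemma meixner_zero (a p : ℝ) (x : ℕ) : meixner 0 a p x = 1 := by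
  simp [meixner_eq_sum_meixnerCoeff, meixnerCoeff_self]

lemma meixner_isBigO (n : ℕ) (a p : ℝ) :
    (fun ℓ : ℕ => meixner n a p ℓ) =O[atTop] fun ℓ => (ℓ : ℝ) ^ n := by
  simp_rw [meixner_eq_sum_meixnerCoeff]
  refine IsBigO.fun_sum fun k hk => ?_
  refine IsBigO.const_mul_left ?_ _
  refine IsBigO.of_bound 1 ((eventually_ge_atTop 1).mono fun ℓ hℓ => ?_)
  have hℓ' : (1 : ℝ) ≤ ℓ := by exact_mod_cast hℓ
  rw [one_mul, Real.norm_of_nonneg (by positivity), Real.norm_of_nonneg (by positivity)]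
  exact (Nat.cast_descFactorial_le_pow ℓ k).trans
    (pow_le_pow_right₀ hℓ' (Nat.lt_succ_iff.1 (mem_range.1 hk)))

section raising

variable {p : ℝ}

lemma mul_one_sub_one_div (hp0 : p ≠ 0) : p * (1 - 1 / p) = -(1 - p) := by
  field_simp
  ring

lemma one_sub_one_div_ne_zero (hp0 : p ≠ 0) (hp1 : p ≠ 1) : 1 - 1 / p ≠ 0 := by
  rw [one_sub_div hp0]
  exact div_ne_zero (sub_ne_zero.2 hp1) hp0

lemma one_sub_mul_meixnerCoeff_succ_zero (hp0 : p ≠ 0) (hp1 : p ≠ 1) (n : ℕ) (a : ℝ) :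
    (1 - p) * meixnerCoeff (n + 1) a p 0 = -(p * a * meixnerCoeff n (a + 1) p 0) := by
  have hz : (1 - 1 / p) ^ ((0 : ℕ) - (n : ℤ))
      = (1 - 1 / p) ^ ((0 : ℕ) - ((n + 1 : ℕ) : ℤ)) * (1 - 1 / p) := by
    rw [← zpow_add_one₀ (one_sub_one_div_ne_zero hp0 hp1)]
    push_cast
    ring_nf
  simp only [meixnerCoeff, Nat.choose_zero_right, Nat.sub_zero]
  rw [hz, risingFact_succ']
  simp only [Nat.cast_zero, Nat.cast_one, add_zero, one_mul]
  linear_combination (a * (1 - 1 / p) ^ ((0 : ℤ) - ((n + 1 : ℕ) : ℤ)) * risingFact (a + 1) n) *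
    mul_one_sub_one_div hp0

lemma choose_succ_mul_risingFact (n k : ℕ) (b : ℝ) :
    (n.choose (k + 1) : ℝ) * ((b + 1) * risingFact (b + 2) (n - (k + 1)))
      = n.choose (k + 1) * risingFact (b + 1) (n - k) := by
  rcases lt_or_ge k n with h | h
  · rw [show n - k = n - (k + 1) + 1 by omega, risingFact_succ', add_assoc, one_add_one_eq_two]
  · simp [Nat.choose_eq_zero_of_lt (Nat.lt_succ_of_le h)]

lemma one_sub_mul_meixnerCoeff_succ_succ (hp0 : p ≠ 0) (hp1 : p ≠ 1) (n : ℕ) (a : ℝ) (k : ℕ) :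
    (1 - p) * meixnerCoeff (n + 1) a p (k + 1)
      = (1 - p) * meixnerCoeff n (a + 1) p k
        - p * (a + (k + 1)) * meixnerCoeff n (a + 1) p (k + 1) := by
  have hz : (1 - 1 / p) ^ (((k + 1 : ℕ) : ℤ) - (n : ℤ))
      = (1 - 1 / p) ^ ((k : ℤ) - (n : ℤ)) * (1 - 1 / p) := by
    rw [← zpow_add_one₀ (one_sub_one_div_ne_zero hp0 hp1)]
    push_cast
    ring_nf
  have hz' : (1 - 1 / p) ^ (((k + 1 : ℕ) : ℤ) - ((n + 1 : ℕ) : ℤ))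
      = (1 - 1 / p) ^ ((k : ℤ) - (n : ℤ)) := by
    push_cast
    ring_nf
  have hR := choose_succ_mul_risingFact n k (a + k)
  simp only [meixnerCoeff, hz, hz', Nat.choose_succ_succ', Nat.add_sub_add_right]
  push_cast at hR ⊢
  rw [show a + ((k : ℝ) + 1) = a + k + 1 by ring, show a + 1 + ((k : ℝ) + 1) = a + k + 2 by ring,
    show a + 1 + (k : ℝ) = a + k + 1 by ring]
  linear_combination (-(1 - p) * (1 - 1 / p) ^ ((k : ℤ) - n)) * hR +
    ((n.choose (k + 1) : ℝ) * (a + k + 1) * (1 - 1 / p) ^ ((k : ℤ) - n) *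
      risingFact (a + k + 2) (n - (k + 1))) * mul_one_sub_one_div hp0

lemma add_mul_meixner (n : ℕ) (a p b : ℝ) (x : ℕ) :
    (b + x) * meixner n a p x
      = ∑ k ∈ range (n + 1), meixnerCoeff n a p k * x.descFactorial (k + 1)
        + (b * meixnerCoeff n a p 0
          + ∑ k ∈ range (n + 1),
              (b + (k + 1)) * meixnerCoeff n a p (k + 1) * x.descFactorial (k + 1)) := by
  have hterm : ∀ k, (b + x) * (meixnerCoeff n a p k * x.descFactorial k)
      = meixnerCoeff n a p k * x.descFactorial (k + 1)
        + (b + k) * meixnerCoeff n a p k * x.descFactorial k := by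
    intro k
    rw [Nat.cast_descFactorial_succ]
    ring
  have hshift : ∑ k ∈ range (n + 1), (b + k) * meixnerCoeff n a p k * x.descFactorial k
      = b * meixnerCoeff n a p 0
        + ∑ k ∈ range (n + 1),
            (b + (k + 1)) * meixnerCoeff n a p (k + 1) * x.descFactorial (k + 1) := by
    rw [sum_range_succ', sum_range_succ (fun k => (b + (k + 1)) * _ * _),
      meixnerCoeff_of_lt n.lt_succ_self, Nat.descFactorial_zero]
    push_cast
    ring
  rw [meixner_eq_sum_meixnerCoeff, mul_sum, sum_congr rfl fun k _ => hterm k, sum_add_distrib,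
    hshift]

lemma one_sub_mul_meixner_succ (hp0 : p ≠ 0) (hp1 : p ≠ 1) (n : ℕ) (a : ℝ) (x : ℕ) :
    (1 - p) * meixner (n + 1) a p x
      = x * meixner n (a + 1) p (x - 1) - p * (a + x) * meixner n (a + 1) p x := by
  have hterm : ∀ k : ℕ, (1 - p) * (meixnerCoeff (n + 1) a p (k + 1) * x.descFactorial (k + 1))
      = (1 - p) * (meixnerCoeff n (a + 1) p k * x.descFactorial (k + 1))
        - p * ((a + (k + 1)) * meixnerCoeff n (a + 1) p (k + 1) * x.descFactorial (k + 1)) := by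
    intro k
    linear_combination (x.descFactorial (k + 1) : ℝ) *
      one_sub_mul_meixnerCoeff_succ_succ hp0 hp1 n a k
  have hshift : (x : ℝ) * meixner n (a + 1) p (x - 1)
      = ∑ k ∈ range (n + 1), meixnerCoeff n (a + 1) p k * x.descFactorial (k + 1) := by
    rw [meixner_eq_sum_meixnerCoeff, mul_sum]
    refine sum_congr rfl fun k _ => ?_
    rw [← Nat.cast_mul_descFactorial_sub_one]
    ring
  rw [meixner_eq_sum_meixnerCoeff, sum_range_succ', mul_add, mul_sum,
    sum_congr rfl fun k _ => hterm k, sum_sub_distrib, ← mul_sum, ← mul_sum, hshift, mul_assoc p,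
    add_mul_meixner, Nat.descFactorial_zero, Nat.cast_one, mul_one]
  linear_combination one_sub_mul_meixnerCoeff_succ_zero hp0 hp1 n a

end raising

lemma tsum_eq_of_add_succ {f g h : ℕ → ℝ} (hf : Summable f) (hg : Summable g)
    (hh : Summable h) (h0 : f 0 + g 0 = 0) (hsucc : ∀ m, f (m + 1) + g (m + 1) = g m + h m) :
    ∑' ℓ, f ℓ = ∑' ℓ, h ℓ := by
  have hfg := (hf.add hg).tsum_eq_zero_add
  rw [h0, zero_add, tsum_congr hsucc, hf.tsum_add hg, hg.tsum_add hh] at hfg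
  linarith

section moments

variable {p : ℝ}

lemma summable_meixner_mul_descFactorial_mul_nbWeight (hp : |p| < 1) (n j : ℕ) (a : ℝ) :
    Summable fun ℓ : ℕ => meixner n a p ℓ * ℓ.descFactorial j * nbWeight a p ℓ :=
  summable_mul_nbWeight (((meixner_isBigO n a p).mul (isBigO_descFactorial j)).congr_right
    fun _ => (pow_add _ _ _).symm) a hp

lemma tsum_meixner_succ_mul_descFactorial_mul_nbWeight (hp0 : p ≠ 0) (hp : |p| < 1)
    (n j : ℕ) (a : ℝ) :
    ∑' ℓ : ℕ, meixner (n + 1) a p ℓ * ℓ.descFactorial j * nbWeight a p ℓ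
      = p * a * j / (1 - p) ^ 2 *
        ∑' ℓ : ℕ, meixner n (a + 1) p ℓ * ℓ.descFactorial (j - 1) * nbWeight (a + 1) p ℓ := by
  have hp1 : p ≠ 1 := fun h => by simp [h] at hp
  have hp1' : 1 - p ≠ 0 := sub_ne_zero.2 hp1.symm
  set K := p * a / (1 - p)
  set T := fun ℓ : ℕ => meixner (n + 1) a p ℓ * ℓ.descFactorial j * nbWeight a p ℓ
  set U := fun i ℓ : ℕ => meixner n (a + 1) p ℓ * ℓ.descFactorial i * nbWeight (a + 1) p ℓ
  have hzero : (1 - p) * T 0 + K * U j 0 = 0 := by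
    have hrec := one_sub_mul_meixner_succ hp0 hp1 n a 0
    have hw := add_mul_nbWeight a hp1 0
    simp only [T, U, K]
    linear_combination (((0 : ℕ).descFactorial j : ℝ) * nbWeight a p 0) * hrec
      - (p * ((0 : ℕ).descFactorial j : ℝ) * meixner n (a + 1) p 0) * hw
  have hsucc : ∀ m : ℕ,
      (1 - p) * T (m + 1) + K * U j (m + 1) = K * U j m + K * j * U (j - 1) m := by
    intro m
    have hrec := one_sub_mul_meixner_succ hp0 hp1 n a (m + 1)
    have hw1 := succ_mul_nbWeight_succ a p m
    have hw2 := add_mul_nbWeight a hp1 m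
    have hw3 := add_mul_nbWeight a hp1 (m + 1)
    have hD := Nat.cast_succ_descFactorial m j
    simp only [T, U, K, Nat.add_sub_cancel] at hrec ⊢
    push_cast at hrec hw3 ⊢
    linear_combination (((m + 1).descFactorial j : ℝ) * nbWeight a p (m + 1)) * hrec
      - (p * meixner n (a + 1) p (m + 1) * ((m + 1).descFactorial j : ℝ)) * hw3
      + (((m + 1).descFactorial j : ℝ) * meixner n (a + 1) p m) * hw1
      + (p * ((m + 1).descFactorial j : ℝ) * meixner n (a + 1) p m) * hw2
      + (K * meixner n (a + 1) p m * nbWeight (a + 1) p m) * hD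
  have key := tsum_eq_of_add_succ
    ((summable_meixner_mul_descFactorial_mul_nbWeight hp (n + 1) j a).mul_left (1 - p))
    ((summable_meixner_mul_descFactorial_mul_nbWeight hp n j (a + 1)).mul_left K)
    ((summable_meixner_mul_descFactorial_mul_nbWeight hp n (j - 1) (a + 1)).mul_left (K * j))
    hzero hsucc
  rw [tsum_mul_left, tsum_mul_left] at key
  calc ∑' ℓ, T ℓ = (1 - p)⁻¹ * ((1 - p) * ∑' ℓ, T ℓ) := by field_simp
    _ = _ := by
      rw [key]
      simp only [K]
      field_simp

lemma tsum_meixner_mul_descFactorial_mul_nbWeight (hp0 : p ≠ 0) (hp : |p| < 1) (n j : ℕ)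
    (hj : j ≤ n) (a : ℝ) :
    ∑' ℓ : ℕ, meixner n a p ℓ * ℓ.descFactorial j * nbWeight a p ℓ
      = if j = n then p ^ n * n.factorial * risingFact a n / (1 - p) ^ (2 * n) else 0 := by
  induction n generalizing j a with
  | zero =>
    obtain rfl := Nat.le_zero.1 hj
    simpa using (hasSum_nbWeight a hp).tsum_eq
  | succ n ih =>
    rw [tsum_meixner_succ_mul_descFactorial_mul_nbWeight hp0 hp]
    cases j with
    | zero => simp
    | succ i =>
      rw [Nat.add_sub_cancel, ih i (by omega) (a + 1)]
      by_cases hi : i = n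
      · subst hi
        have hp1 : 1 - p ≠ 0 := sub_ne_zero.2 fun h => by simp [← h] at hp
        simp only [if_true, risingFact_succ', Nat.factorial_succ]
        push_cast
        field_simp
        ring
      · simp [hi]

lemma tsum_meixner_mul_meixner_mul_nbWeight_of_le (hp0 : p ≠ 0) (hp : |p| < 1) {m n : ℕ}
    (hmn : m ≤ n) (a : ℝ) :
    ∑' ℓ : ℕ, meixner n a p ℓ * meixner m a p ℓ * nbWeight a p ℓ
      = if n = m then p ^ n * n.factorial * risingFact a n / (1 - p) ^ (2 * n) else 0 := by
  have hterm : ∀ ℓ : ℕ, meixner n a p ℓ * meixner m a p ℓ * nbWeight a p ℓ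
      = ∑ k ∈ range (m + 1),
          meixnerCoeff m a p k * (meixner n a p ℓ * ℓ.descFactorial k * nbWeight a p ℓ) := by
    intro ℓ
    rw [meixner_eq_sum_meixnerCoeff m, mul_sum, sum_mul]
    exact sum_congr rfl fun k _ => by ring
  rw [tsum_congr hterm, Summable.tsum_finsetSum fun k _ =>
    (summable_meixner_mul_descFactorial_mul_nbWeight hp n k a).mul_left _]
  simp_rw [tsum_mul_left]
  rw [sum_congr rfl fun k hk => by
    rw [tsum_meixner_mul_descFactorial_mul_nbWeight hp0 hp n k
      (hmn.trans' (Nat.lt_succ_iff.1 (mem_range.1 hk))) a]]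
  simp_rw [mul_ite, mul_zero]
  rw [sum_ite_eq']
  by_cases h : n = m
  · subst h
    simp [meixnerCoeff_self]
  · simp [h, (Nat.lt_of_le_of_ne hmn (Ne.symm h)).not_ge]

end moments

theorem stmt3_general (a p : ℝ) (hp : p ∈ Set.Ioo (0 : ℝ) 1) (n m : ℕ) :
    ∑' ℓ : ℕ, meixner n a p ℓ * meixner m a p ℓ *
        (risingFact a ℓ * p ^ ℓ * (1 - p) ^ a / (ℓ.factorial : ℝ))
      = if n = m then p ^ n * (n.factorial : ℝ) * risingFact a n / (1 - p) ^ (2 * n)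
        else 0 := by
  have hp0 : p ≠ 0 := hp.1.ne'
  have hp1 : |p| < 1 := by rw [abs_of_pos hp.1]; exact hp.2
  change ∑' ℓ : ℕ, meixner n a p ℓ * meixner m a p ℓ * nbWeight a p ℓ = _
  rcases le_total m n with h | h
  · exact tsum_meixner_mul_meixner_mul_nbWeight_of_le hp0 hp1 h a
  · simp_rw [mul_comm (meixner n a p _)]
    rw [tsum_meixner_mul_meixner_mul_nbWeight_of_le hp0 hp1 h a]
    rcases eq_or_ne n m with rfl | hne
    · rfl
    · simp [hne, hne.symm]

/-- orthogonality of the monic Meixner polynomials with respect to the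
generalized negative binomial distribution `NB(a,p)({ℓ}) = (a)^{(ℓ)} p^ℓ (1-p)^a / ℓ!`:
`∑_ℓ 𝒮_n(ℓ) 𝒮_m(ℓ) NB(a,p)({ℓ}) = 1{n=m} p^n n! (a)^{(n)} / (1-p)^{2n}`. -/
theorem stmt3 (a p : ℝ) (ha : 0 < a) (hp : p ∈ Set.Ioo (0 : ℝ) 1) (n m : ℕ) :
    ∑' ℓ : ℕ, meixner n a p ℓ * meixner m a p ℓ *
        (risingFact a ℓ * p ^ ℓ * (1 - p) ^ a / (ℓ.factorial : ℝ))
      = if n = m then p ^ n * (n.factorial : ℝ) * risingFact a n / (1 - p) ^ (2 * n)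
        else 0 :=
  stmt3_general a p hp n m
end

section
/- For any bounded function f : E^n → ℝ on a measurable space E and any finite counting measure η = δ_{x_1}+...+δ_{x_m}, the integral of f against the product measure η^{⊗n} equals the sum over set partitions σ of {1,...,n} of the integral of f_σ against the factorial measure η^(|σ|), where f_σ : E^{|σ|} → ℝ is obtained from f by identifying arguments in the same block of σ. -/
attribute [local instance] Classical.propDecidable

/-- The set partitions of `Fin n`, encoded as finsets of nonempty, pairwise disjoint blocks
covering `Fin n` (each element lies in exactly one block). -/
noncomputable def SetPartitions (n : ℕ) : Finset (Finset (Finset (Fin n))) :=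
  Finset.univ.filter (fun P => (∅ ∉ P) ∧ ∀ k : Fin n, ∃! A, A ∈ P ∧ k ∈ A)

/-!
Every map `g : Fin n → Fin m` has exactly one set partition `P` of `Fin n` as its kernel
(`g k = g l` iff `k` and `l` share a block of `P`), namely the partition into the fibres of `g`.
Grouping the index tuples of the product sum by their kernel therefore gives the sum over
partitions, the inner sum over maps with kernel `P` being the factorial-measure integral of `f_P`.
-/

open Finset

section KernelPartition

variable {ι β : Type*}

def IsSetPartition (P : Finset (Finset ι)) : Prop :=
  ∅ ∉ P ∧ ∀ k, ∃! A, A ∈ P ∧ k ∈ A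

variable [Fintype ι]

theorem IsSetPartition.eq_image_sameBlock {P : Finset (Finset ι)} (hP : IsSetPartition P) :
    P = univ.image fun k => univ.filter fun l => ∃ A ∈ P, k ∈ A ∧ l ∈ A := by
  have block_eq : ∀ A ∈ P, ∀ k ∈ A, (univ.filter fun l => ∃ B ∈ P, k ∈ B ∧ l ∈ B) = A := by
    intro A hA k hk
    ext l
    simp only [mem_filter, mem_univ, true_and]
    refine ⟨?_, fun hl => ⟨A, hA, hk, hl⟩⟩
    rintro ⟨B, hB, hkB, hlB⟩
    rwa [(hP.2 k).unique ⟨hA, hk⟩ ⟨hB, hkB⟩]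
  ext A
  simp only [mem_image, mem_univ, true_and]
  constructor
  · intro hA
    obtain ⟨k, hk⟩ := nonempty_iff_ne_empty.mpr fun h => hP.1 (h ▸ hA)
    exact ⟨k, block_eq A hA k hk⟩
  · rintro ⟨k, rfl⟩
    obtain ⟨B, ⟨hB, hkB⟩, -⟩ := hP.2 k
    rwa [block_eq B hB k hkB]

noncomputable def kernelPartition (g : ι → β) : Finset (Finset ι) :=
  univ.image fun k => univ.filter fun l => g k = g l

theorem exists_mem_kernelPartition_iff (g : ι → β) (k l : ι) :
    (∃ A ∈ kernelPartition g, k ∈ A ∧ l ∈ A) ↔ g k = g l := by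
  simp only [kernelPartition, mem_image, mem_univ, true_and, exists_exists_eq_and, mem_filter]
  exact ⟨fun ⟨j, hk, hl⟩ => hk.symm.trans hl, fun h => ⟨k, rfl, h⟩⟩

theorem isSetPartition_kernelPartition (g : ι → β) : IsSetPartition (kernelPartition g) := by
  refine ⟨fun h => ?_, fun k => ⟨univ.filter fun l => g k = g l, ?_, ?_⟩⟩
  · obtain ⟨j, -, hj⟩ := mem_image.mp h
    simpa using hj.subset (mem_filter.mpr ⟨mem_univ j, rfl⟩)
  · simp [kernelPartition]
  · rintro A ⟨hA, hkA⟩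
    obtain ⟨j, -, rfl⟩ := mem_image.mp hA
    simp only [mem_filter, mem_univ, true_and] at hkA
    simp only [hkA]

theorem IsSetPartition.kernel_iff_eq_kernelPartition {P : Finset (Finset ι)}
    (hP : IsSetPartition P) (g : ι → β) :
    (∀ k l, g k = g l ↔ ∃ A ∈ P, k ∈ A ∧ l ∈ A) ↔ kernelPartition g = P := by
  constructor
  · intro hker
    conv_rhs => rw [hP.eq_image_sameBlock]
    simp only [kernelPartition, hker]
  · rintro rfl k l
    exact (exists_mem_kernelPartition_iff g k l).symm

end KernelPartition

theorem mem_setPartitions {n : ℕ} {P : Finset (Finset (Fin n))} :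
    P ∈ SetPartitions n ↔ IsSetPartition P := by
  simp [SetPartitions, IsSetPartition]

/-- for a finite counting measure `η = δ_{x 0} + ⋯ + δ_{x (m-1)}` and any
`f : E^n → ℝ`, the integral `∫ f dη^{⊗ n}` (the sum of `f(x∘i)` over all index tuples `i`)
equals the sum, over set partitions `P` of `{1,…,n}`, of `∫ f_P dη^{(|P|)}`: the inner sum
runs over maps `g` whose kernel is exactly `P` (i.e. `g` assigns pairwise distinct point
indices to the blocks of `P`), which encodes integrating the identified function `f_P`
against the `|P|`-th factorial measure. -/
theorem stmt7 {E : Type*} (m n : ℕ) (x : Fin m → E) (f : (Fin n → E) → ℝ) :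
    ∑ i : Fin n → Fin m, f (x ∘ i)
      = ∑ P ∈ SetPartitions n,
          ∑ g ∈ Finset.univ.filter
              (fun g : Fin n → Fin m => ∀ k l, g k = g l ↔ ∃ A ∈ P, k ∈ A ∧ l ∈ A),
            f (x ∘ g) := by
  rw [← sum_fiberwise_of_maps_to (g := kernelPartition) (t := SetPartitions n)
    fun g _ => mem_setPartitions.mpr (isSetPartition_kernelPartition g)]
  refine sum_congr rfl fun P hP => ?_
  simp only [(mem_setPartitions.mp hP).kernel_iff_eq_kernelPartition]
end

section
/- Let E be a finite set and let (P_t) be the semigroup of a conservative, consistent Markov process on configurations ℕ^E, with n-particle semigroups p_t^{[n]} defined on permutation-invariant functions by (P_t f)(δ_{x_1}+...+δ_{x_n}) = (p_t^{[n]} f_n)(x_1,...,x_n). Then for every bounded permutation-invariant f_n : E^n → ℝ, every configuration η, and every t ≥ 0, one has P_t J_n(f_n, ·)(η) = J_n(p_t^{[n]} f_n, η), where J_n(f_n, η) = ∫ f_n dη^(n). -/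
open Finset

variable {E : Type*} [Fintype E] [DecidableEq E]

/-- The configuration (counting measure) associated with a labelled tuple of particles. -/
def conf {n : ℕ} (y : Fin n → E) : E → ℕ :=
  fun e => (Finset.univ.filter (fun k => y k = e)).card

/-- The lowering operator `𝒜f(η) = ∫ f(η - δ_x) η(dx) = ∑_x η(x) f(η - δ_x)`. -/
def lowerOp (F : (E → ℕ) → ℝ) (η : E → ℕ) : ℝ :=
  ∑ e : E, (η e : ℝ) * F (fun e' => η e' - if e' = e then 1 else 0)

/-- The generalized falling factorial polynomial `J_n(f,η) = ∫ f dη^{(n)}`, where the `n`-th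
factorial measure assigns mass `∏_e (η e)_{ξ_y e}` to the tuple `y` (with `ξ_y = conf y`). -/
def Jfact (n : ℕ) (f : (Fin n → E) → ℝ) (η : E → ℕ) : ℝ :=
  ∑ y : Fin n → E, f y * ∏ e : E, ((η e).descFactorial (conf y e) : ℝ)

/-! ### Auxiliary lemmas -/

lemma desc_succ_eq (x k : ℕ) : x.descFactorial (k + 1) = x * (x - 1).descFactorial k := by
  cases x with
  | zero => simp
  | succ x => rw [Nat.succ_descFactorial_succ]; simp

lemma nat_key (x k : ℕ) : x * (x - 1).descFactorial k = (x - k) * x.descFactorial k := by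
  rw [← desc_succ_eq, Nat.descFactorial_succ]

lemma cast_sub_mul_desc (x k : ℕ) :
    ((x - k : ℕ) : ℝ) * ((x.descFactorial k : ℕ) : ℝ)
      = ((x : ℝ) - (k : ℝ)) * ((x.descFactorial k : ℕ) : ℝ) := by
  rcases le_or_gt k x with h | h
  · rw [Nat.cast_sub h]
  · rw [Nat.descFactorial_eq_zero_iff_lt.mpr h]; simp

lemma sum_conf {n : ℕ} (y : Fin n → E) : ∑ e : E, conf y e = n := by
  have := Finset.card_eq_sum_card_fiberwise
    (f := y) (s := (Finset.univ : Finset (Fin n))) (t := (Finset.univ : Finset E))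
    (fun k _ => Finset.mem_univ (y k))
  simpa [conf, Finset.card_univ] using this.symm

lemma conf_cons {n : ℕ} (a : E) (w : Fin n → E) (e : E) :
    conf (Fin.cons a w) e = conf w e + (if e = a then 1 else 0) := by
  unfold conf
  rw [Finset.card_filter, Finset.card_filter, Fin.sum_univ_succ]
  simp only [Fin.cons_zero, Fin.cons_succ]
  rw [add_comm]
  congr 1
  by_cases h : a = e
  · rw [if_pos h, if_pos h.symm]
  · rw [if_neg h, if_neg (fun h' => h h'.symm)]

/-- Key pointwise identity (Lemma C). -/
lemma lemC (η k : E → ℕ) :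
    ∑ e : E, (η e : ℝ) * ∏ e' : E, (((η e' - if e' = e then 1 else 0).descFactorial (k e') : ℕ) : ℝ)
      = (((∑ e : E, η e : ℕ) : ℝ) - ((∑ e : E, k e : ℕ) : ℝ))
        * ∏ e : E, (((η e).descFactorial (k e) : ℕ) : ℝ) := by
  have hterm : ∀ e : E,
      (η e : ℝ) * ∏ e' : E, (((η e' - if e' = e then 1 else 0).descFactorial (k e') : ℕ) : ℝ)
        = ((η e : ℝ) - (k e : ℝ)) * ∏ e' : E, (((η e').descFactorial (k e') : ℕ) : ℝ) := by
    intro e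
    rw [← Finset.mul_prod_erase Finset.univ _ (Finset.mem_univ e),
        ← Finset.mul_prod_erase Finset.univ
          (fun e' => (((η e').descFactorial (k e') : ℕ) : ℝ)) (Finset.mem_univ e)]
    have h1 : ∀ e' ∈ Finset.univ.erase e,
        (((η e' - if e' = e then 1 else 0).descFactorial (k e') : ℕ) : ℝ)
          = (((η e').descFactorial (k e') : ℕ) : ℝ) := by
      intro e' he'
      rw [if_neg (Finset.mem_erase.mp he').1]
      simp
    rw [Finset.prod_congr rfl h1, if_pos rfl]
    have h2 : (η e : ℝ) * (((η e - 1).descFactorial (k e) : ℕ) : ℝ)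
        = ((η e : ℝ) - (k e : ℝ)) * (((η e).descFactorial (k e) : ℕ) : ℝ) := by
      have h3 : ((η e * (η e - 1).descFactorial (k e) : ℕ) : ℝ)
          = (((η e - k e) * (η e).descFactorial (k e) : ℕ) : ℝ) := by
        rw [nat_key]
      rw [Nat.cast_mul, Nat.cast_mul] at h3
      rw [h3, cast_sub_mul_desc]
    rw [← mul_assoc, ← mul_assoc, h2]
  rw [Finset.sum_congr rfl (fun e _ => hterm e), ← Finset.sum_mul]
  congr 1
  rw [Finset.sum_sub_distrib]
  push_cast
  ring

/-- `∑_a η a · ∏ desc(η - δ_a, k)` packaged differently: raising a product. -/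
lemma prod_desc_succ (η k : E → ℕ) (a : E) :
    ∏ e : E, (((η e).descFactorial (k e + if e = a then 1 else 0) : ℕ) : ℝ)
      = (η a : ℝ) * ∏ e : E, (((η e - if e = a then 1 else 0).descFactorial (k e) : ℕ) : ℝ) := by
  rw [← Finset.mul_prod_erase Finset.univ _ (Finset.mem_univ a),
      ← Finset.mul_prod_erase Finset.univ
        (fun e => (((η e - if e = a then 1 else 0).descFactorial (k e) : ℕ) : ℝ)) (Finset.mem_univ a)]
  have herase : ∀ e ∈ Finset.univ.erase a,
      (((η e).descFactorial (k e + if e = a then 1 else 0) : ℕ) : ℝ)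
        = (((η e - if e = a then 1 else 0).descFactorial (k e) : ℕ) : ℝ) := by
    intro e he
    rw [if_neg (Finset.mem_erase.mp he).1]
    simp
  rw [Finset.prod_congr rfl herase, if_pos rfl, desc_succ_eq]
  push_cast
  ring

/-- `J_n(1, η) = (|η|)_n`. -/
lemma Jfact_one (n : ℕ) (η : E → ℕ) :
    Jfact n (fun _ => (1 : ℝ)) η = (((∑ e, η e).descFactorial n : ℕ) : ℝ) := by
  induction n generalizing η with
  | zero => simp [Jfact, conf]
  | succ n ih =>
    have key := Fintype.sum_equiv (Fin.consEquiv (fun _ : Fin (n+1) => E))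
      (fun p : E × (Fin n → E) =>
        ∏ e : E, (((η e).descFactorial (conf p.2 e + if e = p.1 then 1 else 0) : ℕ) : ℝ))
      (fun y : Fin (n+1) → E => ∏ e : E, (((η e).descFactorial (conf y e) : ℕ) : ℝ))
      (fun p => Finset.prod_congr rfl (fun e _ => by
        rw [show conf ((Fin.consEquiv (fun _ : Fin (n+1) => E)) p) e
            = conf (Fin.cons p.1 p.2) e from rfl, conf_cons]))
    have hJ : Jfact (n + 1) (fun _ => (1:ℝ)) η
        = ∑ a : E, ∑ w : Fin n → E,
            ∏ e : E, (((η e).descFactorial (conf w e + if e = a then 1 else 0) : ℕ) : ℝ) := by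
      unfold Jfact
      simp only [one_mul]
      rw [← key, Fintype.sum_prod_type]
    have hw : ∀ w : Fin n → E,
        ∑ a : E, ∏ e : E, (((η e).descFactorial (conf w e + if e = a then 1 else 0) : ℕ) : ℝ)
          = (((∑ e, η e : ℕ) : ℝ) - (n : ℝ))
            * ∏ e : E, (((η e).descFactorial (conf w e) : ℕ) : ℝ) := by
      intro w
      calc ∑ a : E, ∏ e : E, (((η e).descFactorial (conf w e + if e = a then 1 else 0) : ℕ) : ℝ)
          = ∑ a : E, (η a : ℝ)
              * ∏ e : E, (((η e - if e = a then 1 else 0).descFactorial (conf w e) : ℕ) : ℝ) :=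
            Finset.sum_congr rfl (fun a _ => prod_desc_succ η (conf w) a)
        _ = (((∑ e, η e : ℕ) : ℝ) - ((∑ e, conf w e : ℕ) : ℝ))
              * ∏ e : E, (((η e).descFactorial (conf w e) : ℕ) : ℝ) := lemC η (conf w)
        _ = (((∑ e, η e : ℕ) : ℝ) - (n : ℝ))
              * ∏ e : E, (((η e).descFactorial (conf w e) : ℕ) : ℝ) := by rw [sum_conf]
    have hsum : ∑ w : Fin n → E, ∏ e : E, (((η e).descFactorial (conf w e) : ℕ) : ℝ)
        = Jfact n (fun _ => (1:ℝ)) η := by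
      unfold Jfact; simp only [one_mul]
    rw [hJ, Finset.sum_comm, Finset.sum_congr rfl (fun w _ => hw w), ← Finset.mul_sum,
      hsum, ih η, Nat.descFactorial_succ, Nat.cast_mul, cast_sub_mul_desc]

/-- `J_n` vanishes below the `n`-particle sector. -/
lemma Jfact_zero (n : ℕ) (g : (Fin n → E) → ℝ) (ζ : E → ℕ) (h : (∑ e, ζ e) < n) :
    Jfact n g ζ = 0 := by
  unfold Jfact
  apply Finset.sum_eq_zero
  intro y _
  have hex : ∃ e, ζ e < conf y e := by
    by_contra hc
    push_neg at hc
    have : n ≤ ∑ e, ζ e := by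
      rw [← sum_conf y]
      exact Finset.sum_le_sum fun e _ => hc e
    omega
  obtain ⟨e, he⟩ := hex
  rw [Finset.prod_eq_zero (Finset.mem_univ e)
    (by rw [Nat.descFactorial_eq_zero_iff_lt.mpr he, Nat.cast_zero]), mul_zero]

/-- On the `n`-particle sector, `J_n(G ∘ conf, ζ) = n! G(ζ)`. -/
lemma Jfact_sector (n : ℕ) (G : (E → ℕ) → ℝ) (ζ : E → ℕ) (h : (∑ e, ζ e) = n) :
    Jfact n (fun y => G (conf y)) ζ = (n.factorial : ℝ) * G ζ := by
  unfold Jfact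
  have hterm : ∀ y : Fin n → E,
      G (conf y) * ∏ e : E, (((ζ e).descFactorial (conf y e) : ℕ) : ℝ)
        = G ζ * ∏ e : E, (((ζ e).descFactorial (conf y e) : ℕ) : ℝ) := by
    intro y
    by_cases hy : ∀ e, conf y e ≤ ζ e
    · have hyz : conf y = ζ := by
        funext e
        have hsum : ∑ e, conf y e = ∑ e, ζ e := by rw [sum_conf, h]
        exact (Finset.sum_eq_sum_iff_of_le (fun i _ => hy i)).mp hsum e (Finset.mem_univ e)
      rw [hyz]
    · push_neg at hy
      obtain ⟨e, he⟩ := hy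
      rw [Finset.prod_eq_zero (Finset.mem_univ e)
        (by rw [Nat.descFactorial_eq_zero_iff_lt.mpr he, Nat.cast_zero]), mul_zero, mul_zero]
  rw [Finset.sum_congr rfl (fun y _ => hterm y), ← Finset.mul_sum]
  have h1 : ∑ y : Fin n → E, ∏ e : E, (((ζ e).descFactorial (conf y e) : ℕ) : ℝ)
      = (((∑ e, ζ e).descFactorial n : ℕ) : ℝ) := by
    have := Jfact_one (E := E) n ζ
    unfold Jfact at this
    simpa only [one_mul] using this
  rw [h1, h, Nat.descFactorial_self, mul_comm]

lemma lowerOp_apply (F : (E → ℕ) → ℝ) (η : E → ℕ) :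
    lowerOp F η = ∑ e : E, (η e : ℝ) * F (fun e' => η e' - if e' = e then 1 else 0) := rfl

/-- The lowering operator acts on `J_n` as multiplication by `|η| - n`. -/
lemma lower_Jfact (n : ℕ) (g : (Fin n → E) → ℝ) (η : E → ℕ) :
    lowerOp (fun ζ => Jfact n g ζ) η
      = (((∑ e, η e : ℕ) : ℝ) - (n : ℝ)) * Jfact n g η := by
  rw [lowerOp_apply]
  unfold Jfact
  simp only [Finset.mul_sum]
  rw [Finset.sum_comm]
  rw [Finset.sum_congr rfl (fun z (_ : z ∈ Finset.univ) => by
    calc ∑ e : E, (η e : ℝ) * (g z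
            * ∏ e' : E, (((η e' - if e' = e then 1 else 0).descFactorial (conf z e') : ℕ) : ℝ))
        = g z * ∑ e : E, (η e : ℝ)
            * ∏ e' : E, (((η e' - if e' = e then 1 else 0).descFactorial (conf z e') : ℕ) : ℝ) := by
          rw [Finset.mul_sum]; exact Finset.sum_congr rfl fun e _ => by ring
      _ = g z * ((((∑ e, η e : ℕ) : ℝ) - ((∑ e, conf z e : ℕ) : ℝ))
            * ∏ e : E, (((η e).descFactorial (conf z e) : ℕ) : ℝ)) := by rw [lemC]
      _ = (((∑ e, η e : ℕ) : ℝ) - (n : ℝ))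
            * (g z * ∏ e : E, (((η e).descFactorial (conf z e) : ℕ) : ℝ)) := by
          rw [sum_conf]; ring)]

/-- Cutoff of a function to the `n`-particle sector. -/
def cutoff (n : ℕ) (F : (E → ℕ) → ℝ) : (E → ℕ) → ℝ :=
  fun ξ => if (∑ e, ξ e) = n then F ξ else 0

lemma sum_sub_delta (η : E → ℕ) (e : E) (he : 1 ≤ η e) :
    ∑ e' : E, (η e' - if e' = e then 1 else 0) = (∑ e' : E, η e') - 1 := by
  have h1 : ∑ e' : E, (η e' - if e' = e then 1 else 0) + ∑ e' : E, (if e' = e then 1 else 0)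
      = ∑ e' : E, η e' := by
    rw [← Finset.sum_add_distrib]
    refine Finset.sum_congr rfl fun e' _ => ?_
    by_cases h : e' = e
    · subst h; rw [if_pos rfl]; omega
    · rw [if_neg h]; omega
  have h2 : ∑ e' : E, (if e' = e then (1:ℕ) else 0) = 1 := by simp
  omega

/-- The sector identity: `n! 𝒜^m (F|_n) = m! J_n(F ∘ conf, ·)` on the `(n+m)`-sector. -/
lemma sector_iter (n : ℕ) (F : (E → ℕ) → ℝ) :
    ∀ (m : ℕ) (η : E → ℕ), (∑ e, η e) = n + m →
      (n.factorial : ℝ) * (lowerOp^[m] (cutoff n F)) η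
        = (m.factorial : ℝ) * Jfact n (fun y => F (conf y)) η := by
  intro m
  induction m with
  | zero =>
    intro η hη
    simp only [Function.iterate_zero, id_eq, Nat.factorial_zero, Nat.cast_one, one_mul]
    rw [Jfact_sector n F η (by simpa using hη), cutoff, if_pos (by simpa using hη)]
  | succ m ih =>
    intro η hη
    rw [Function.iterate_succ_apply', lowerOp_apply, Finset.mul_sum]
    have key : ∀ e : E, (n.factorial : ℝ) * ((η e : ℝ)
          * (lowerOp^[m] (cutoff n F)) (fun e' => η e' - if e' = e then 1 else 0))
        = (m.factorial : ℝ) * ((η e : ℝ)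
          * Jfact n (fun y => F (conf y)) (fun e' => η e' - if e' = e then 1 else 0)) := by
      intro e
      rcases Nat.eq_zero_or_pos (η e) with h0 | h1
      · rw [h0]; simp
      · have hs : (∑ e', (η e' - if e' = e then 1 else 0)) = n + m := by
          have := sum_sub_delta η e h1
          omega
        linear_combination (η e : ℝ) * ih _ hs
    rw [Finset.sum_congr rfl (fun e _ => key e), ← Finset.mul_sum,
      show (∑ e : E, (η e : ℝ) * Jfact n (fun y => F (conf y))
          (fun e' => η e' - if e' = e then 1 else 0))
        = lowerOp (fun ζ => Jfact n (fun y => F (conf y)) ζ) η from rfl,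
      lower_Jfact, hη]
    push_cast [Nat.factorial_succ]
    ring

/-- `𝒜^m G (η)` only depends on `G` on the `(|η|-m)`-sector. -/
lemma iter_sector_dep (k : ℕ) : ∀ (m : ℕ) (G1 G2 : (E → ℕ) → ℝ),
    (∀ ξ : E → ℕ, (∑ e, ξ e) = k → G1 ξ = G2 ξ) →
    ∀ η : E → ℕ, (∑ e, η e) = k + m → (lowerOp^[m] G1) η = (lowerOp^[m] G2) η := by
  intro m
  induction m with
  | zero =>
    intro G1 G2 hG η hη
    simpa using hG η (by simpa using hη)
  | succ m ih =>
    intro G1 G2 hG η hη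
    rw [Function.iterate_succ_apply', Function.iterate_succ_apply',
      lowerOp_apply, lowerOp_apply]
    refine Finset.sum_congr rfl (fun e _ => ?_)
    rcases Nat.eq_zero_or_pos (η e) with h0 | h1
    · rw [h0]; simp
    · congr 1
      refine ih G1 G2 hG _ ?_
      have := sum_sub_delta η e h1
      omega

/-- Consistency iterates: `P 𝒜^m = 𝒜^m P`. -/
lemma consist_iter (P : ((E → ℕ) → ℝ) →ₗ[ℝ] ((E → ℕ) → ℝ))
    (hcons : ∀ (F : (E → ℕ) → ℝ) (η : E → ℕ), P (lowerOp F) η = lowerOp (P F) η) :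
    ∀ (m : ℕ) (G : (E → ℕ) → ℝ), P (lowerOp^[m] G) = lowerOp^[m] (P G) := by
  intro m
  induction m with
  | zero => intro G; rfl
  | succ m ih =>
    intro G
    rw [Function.iterate_succ_apply, Function.iterate_succ_apply, ih (lowerOp G)]
    congr 1
    exact funext fun η => hcons G η

/-- self-intertwining with generalized falling factorial polynomials.
`P` is the (time-`t`) Markov operator of a conservative, consistent process on configurations
`ℕ^E`: it is linear, it commutes with the lowering operator (consistency), and `P F (η)`
depends only on the restriction of `F` to the particle-number sector of `η` (conservativity).
Bounded permutation-invariant functions `f_n` on `E^n` are exactly those of the form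
`f_n = F ∘ conf`, and the `n`-particle semigroup is `(p^{[n]} f_n)(y) = P F (conf y)`.
Conclusion: `P (J_n(f_n, ·)) (η) = J_n(p^{[n]} f_n, η)`. -/
theorem stmt9 (P : ((E → ℕ) → ℝ) →ₗ[ℝ] ((E → ℕ) → ℝ))
    (hconsistent : ∀ (F : (E → ℕ) → ℝ) (η : E → ℕ),
      P (lowerOp F) η = lowerOp (P F) η)
    (hconservative : ∀ (F G : (E → ℕ) → ℝ) (η : E → ℕ),
      (∀ ξ : E → ℕ, (∑ e, ξ e) = (∑ e, η e) → F ξ = G ξ) → P F η = P G η)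
    (n : ℕ) (F : (E → ℕ) → ℝ) (η : E → ℕ) :
    P (fun ζ => Jfact n (fun y => F (conf y)) ζ) η
      = Jfact n (fun y => P F (conf y)) η := by
  set J : (E → ℕ) → ℝ := fun ζ => Jfact n (fun y => F (conf y)) ζ with hJ
  rcases lt_or_ge (∑ e, η e) n with hlt | hle
  · have hR : Jfact n (fun y => P F (conf y)) η = 0 := Jfact_zero n _ η hlt
    have hL : P J η = 0 := by
      have h0 : P J η = P 0 η := hconservative J 0 η (fun ξ hξ => by
        rw [hJ]
        simpa using Jfact_zero n (fun y => F (conf y)) ξ (by rw [hξ]; exact hlt))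
      rw [h0, map_zero]
      rfl
    rw [hL, hR]
  · obtain ⟨m, hm⟩ : ∃ m, (∑ e, η e) = n + m := ⟨_, (Nat.add_sub_cancel' hle).symm⟩
    have hmf : ((m.factorial : ℝ)) ≠ 0 := Nat.cast_ne_zero.mpr (Nat.factorial_ne_zero m)
    apply mul_left_cancel₀ hmf
    calc (m.factorial : ℝ) * P J η
        = P ((m.factorial : ℝ) • J) η := by rw [map_smul]; rfl
      _ = P ((n.factorial : ℝ) • (lowerOp^[m] (cutoff n F))) η := by
          apply hconservative
          intro ξ hξ
          simp only [Pi.smul_apply, smul_eq_mul, hJ]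
          exact (sector_iter n F m ξ (by rw [hξ]; exact hm)).symm
      _ = (n.factorial : ℝ) * (P (lowerOp^[m] (cutoff n F)) η) := by rw [map_smul]; rfl
      _ = (n.factorial : ℝ) * (lowerOp^[m] (P (cutoff n F))) η := by
          rw [consist_iter P hconsistent m (cutoff n F)]
      _ = (n.factorial : ℝ) * (lowerOp^[m] (cutoff n (P F))) η := by
          congr 1
          refine iter_sector_dep n m _ _ ?_ η hm
          intro ξ hξ
          have h1 : P (cutoff n F) ξ = P F ξ := hconservative _ _ ξ (fun ζ hζ => by
            rw [cutoff, if_pos (by rw [hζ, hξ])])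
          rw [h1, cutoff, if_pos hξ]
      _ = (m.factorial : ℝ) * Jfact n (fun y => P F (conf y)) η := sector_iter n (P F) m η hm
end

section
/- Let η be a configuration of r particles, i.e. η = δ_{x_1}+...+δ_{x_r} with x_i in a measurable space E. For any n ≤ r and any permutation-invariant bounded f_n : E^n → ℝ, one has J_n(f_n, η) = (n!/(r-n)!) · 𝒜_{n,r} f_n(x_1,...,x_r), where 𝒜_{n,r} = 𝒜_{n,n+1} ∘ ... ∘ 𝒜_{r-1,r} is the composition of lowering operators 𝒜_{k-1,k} g(y_1,...,y_k) = Σ_{j=1}^k g(y_1,...,ŷ_j,...,y_k) (with y_j omitted). -/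
/-!
Expand `𝒜_{n,n+d}` one lowering step at a time. Deleting the point `j` from the configuration
and summing the injective `n`-tuples of what is left over all `j` counts every injective `n`-tuple
of the full configuration of `m + 1` points once for each point it misses, i.e. `m + 1 - n` times.
By induction on `d` this gives `d! · J_n(f, η) = n! · 𝒜_{n,n+d} f(x)`, the base case `d = 0`
being the `n!` reorderings of `x` under which `f` is invariant.
-/

open Finset Function
open scoped Nat

/-- Iterated lowering operators `𝒜_{n,n+d} = 𝒜_{n,n+1} ∘ ⋯ ∘ 𝒜_{n+d-1,n+d}` acting on
functions of tuples: `𝒜_{k-1,k} g (y₁,…,y_k) = ∑_j g(y₁,…,ŷ_j,…,y_k)`. -/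
def AIter {E : Type*} (n : ℕ) : (d : ℕ) → ((Fin n → E) → ℝ) → (Fin (n + d) → E) → ℝ
  | 0, f => f
  | d + 1, f => fun y => ∑ j : Fin (n + d + 1), AIter n d f (y ∘ j.succAbove)

section InjectiveTuples

variable {M : Type*} [AddCommMonoid M] {n m : ℕ}

lemma Fin.sum_injective_comp_succAbove (j : Fin (m + 1)) (g : (Fin n → Fin (m + 1)) → M) :
    ∑ i ∈ univ.filter (fun i : Fin n → Fin m => Injective i), g (j.succAbove ∘ i)
      = ∑ i ∈ univ.filter (fun i : Fin n → Fin (m + 1) => Injective i ∧ j ∉ univ.image i),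
          g i := by
  refine sum_bij (fun i _ => j.succAbove ∘ i) ?_ ?_ ?_ (fun _ _ => rfl)
  · intro i hi
    simp only [mem_filter, mem_univ, true_and, mem_image, not_exists] at hi ⊢
    exact ⟨Fin.succAbove_right_injective.comp hi, fun k => Fin.succAbove_ne j (i k)⟩
  · intro i₁ _ i₂ _ h
    exact Fin.succAbove_right_injective.comp_left h
  · intro i hi
    simp only [mem_filter, mem_univ, true_and, mem_image, not_exists] at hi
    choose y hy using fun k => Fin.exists_succAbove_eq (hi.2 k)
    refine ⟨y, ?_, funext hy⟩
    simp only [mem_filter, mem_univ, true_and]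
    intro k₁ k₂ h
    exact hi.1 (by rw [← hy k₁, ← hy k₂, h])

lemma Fin.card_compl_image_of_injective {i : Fin n → Fin m} (hi : Injective i) :
    #(univ \ univ.image i) = m - n := by
  rw [card_sdiff_of_subset (subset_univ _), card_image_of_injective _ hi, card_univ,
    Fintype.card_fin, card_univ, Fintype.card_fin]

lemma Fin.sum_succAbove_sum_injective (g : (Fin n → Fin (m + 1)) → M) :
    ∑ j : Fin (m + 1), ∑ i ∈ univ.filter (fun i : Fin n → Fin m => Injective i),
        g (j.succAbove ∘ i)
      = (m + 1 - n) • ∑ i ∈ univ.filter (fun i : Fin n → Fin (m + 1) => Injective i), g i := by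
  simp_rw [Fin.sum_injective_comp_succAbove, smul_sum]
  rw [sum_comm' (t' := univ.filter fun i : Fin n → Fin (m + 1) => Injective i)
    (s' := fun i => univ \ univ.image i) (by simp [and_comm])]
  refine sum_congr rfl fun i hi => ?_
  rw [Finset.sum_const, Fin.card_compl_image_of_injective (mem_filter.mp hi).2]

lemma Fin.sum_injective_self_of_perm_invariant {E : Type*} (f : (Fin n → E) → M)
    (hf : ∀ (σ : Equiv.Perm (Fin n)) (y : Fin n → E), f (y ∘ σ) = f y) (x : Fin n → E) :
    ∑ i ∈ univ.filter (fun i : Fin n → Fin n => Injective i), f (x ∘ i) = n ! • f x := by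
  have hcard : #(univ.filter fun i : Fin n → Fin n => Injective i) = n ! := by
    rw [← Fintype.card_subtype, Fintype.card_congr (Equiv.subtypeInjectiveEquivEmbedding _ _),
      Fintype.card_embedding_eq, Fintype.card_fin, Nat.descFactorial_self]
  rw [sum_congr rfl fun i hi => hf (.ofBijective i (mem_filter.mp hi).2.bijective_of_finite) x,
    Finset.sum_const, hcard]

end InjectiveTuples

lemma factorial_mul_sum_injective_eq_AIter {E : Type*} (n d : ℕ) (f : (Fin n → E) → ℝ)
    (hf : ∀ (σ : Equiv.Perm (Fin n)) (y : Fin n → E), f (y ∘ σ) = f y) (x : Fin (n + d) → E) :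
    (d ! : ℝ) * ∑ i ∈ univ.filter (fun i : Fin n → Fin (n + d) => Injective i), f (x ∘ i)
      = n ! * AIter n d f x := by
  induction d with
  | zero =>
    rw [Nat.factorial_zero, Nat.cast_one, one_mul, ← nsmul_eq_mul]
    exact Fin.sum_injective_self_of_perm_invariant f hf x
  | succ d ih =>
    have hlower := Fin.sum_succAbove_sum_injective (m := n + d) (fun i => f (x ∘ i))
    rw [show n + d + 1 - n = d + 1 by omega, nsmul_eq_mul] at hlower
    calc ((d + 1) ! : ℝ) * ∑ i ∈ univ.filter (fun i : Fin n → Fin (n + d + 1) => Injective i),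
          f (x ∘ i)
        = d ! * ∑ j : Fin (n + d + 1),
            ∑ i ∈ univ.filter (fun i : Fin n → Fin (n + d) => Injective i),
              f ((x ∘ j.succAbove) ∘ i) := by
          rw [Nat.factorial_succ, Nat.cast_mul, mul_comm _ (d ! : ℝ), mul_assoc, ← hlower]
          rfl
      _ = n ! * AIter n (d + 1) f x := by
          rw [mul_sum, AIter, mul_sum]
          exact sum_congr rfl fun j _ => ih (x ∘ j.succAbove)

theorem stmt10_general {E : Type*} (n d : ℕ) (f : (Fin n → E) → ℝ)
    (hperm : ∀ (σ : Equiv.Perm (Fin n)) (y : Fin n → E), f (y ∘ σ) = f y)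
    (x : Fin (n + d) → E) :
    ∑ i ∈ Finset.univ.filter (fun i : Fin n → Fin (n + d) => Function.Injective i),
        f (x ∘ i)
      = ((n.factorial : ℝ) / (d.factorial : ℝ)) * AIter n d f x := by
  rw [div_mul_eq_mul_div, eq_div_iff (by positivity), mul_comm,
    factorial_mul_sum_injective_eq_AIter n d f hperm x]

/-- for `η = δ_{x 0} + ⋯ + δ_{x (r-1)}` with `r = n + d` and permutation
invariant `f : E^n → ℝ`, the generalized falling factorial polynomial
`J_n(f,η) = ∫ f dη^{(n)}` (the sum of `f(x ∘ i)` over injective tuples `i`) equals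
`(n! / (r-n)!) · 𝒜_{n,r} f (x₁,…,x_r)`. -/
theorem stmt10 {E : Type*} [DecidableEq E] (n d : ℕ) (f : (Fin n → E) → ℝ)
    (hperm : ∀ (σ : Equiv.Perm (Fin n)) (y : Fin n → E), f (y ∘ σ) = f y)
    (x : Fin (n + d) → E) :
    ∑ i ∈ Finset.univ.filter (fun i : Fin n → Fin (n + d) => Function.Injective i),
        f (x ∘ i)
      = ((n.factorial : ℝ) / (d.factorial : ℝ)) * AIter n d f x :=
  stmt10_general n d f hperm x
end

section
/- Let μ be a probability measure on ℕ^E (E finite) with all moments finite, which is completely independent (product measure). Let A_1,...,A_N be the distinct coordinates and d_1,...,d_N ∈ ℕ with Σd_i = n. Then the orthogonal projection of the monomial η ↦ ∏_i η_{A_i}^{d_i} onto the orthogonal complement of polynomials of degree ≤ n-1 in L²(μ) factorizes as the product over i of the orthogonal projections of η ↦ η_{A_i}^{d_i} onto the complements of polynomials of degree ≤ d_i - 1 in the single variable η_{A_i}. -/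
/-!
In a product measure the integral of a product of one-variable functions is the product of
their integrals. If `∑ eᵢ < ∑ dᵢ` then `eᵢ < dᵢ` for some `i`, and the `i`-th factor
`∫ Qᵢ · xᵢ^{eᵢ} dμᵢ` vanishes, so `∏ Qᵢ(xᵢ)` is orthogonal to every monomial of lower total
degree. Expanding `∏ Qᵢ(xᵢ)` gives the leading monomial `∏ xᵢ^{dᵢ}` (all `Qᵢ` are monic) plus
monomials with exponent vectors `e ≤ d`, `e ≠ d`, which have total degree `< ∑ dᵢ`.
-/

open MeasureTheory Polynomial Finset

theorem integral_pi_prod_eval_mul_prod_pow_eq_zero {ι α : Type*} [Fintype ι]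
    [MeasurableSpace α] {μ : ι → Measure α} [∀ i, SigmaFinite (μ i)] (x : α → ℝ)
    {Q : ι → ℝ[X]} {d e : ι → ℕ}
    (horth : ∀ i j, j < d i → ∫ a, (Q i).eval (x a) * x a ^ j ∂(μ i) = 0)
    (he : ∑ i, e i < ∑ i, d i) :
    ∫ η : ι → α, (∏ i, (Q i).eval (x (η i))) * ∏ i, x (η i) ^ e i ∂(Measure.pi μ) = 0 := by
  obtain ⟨i, -, hi⟩ := exists_lt_of_sum_lt he
  simp_rw [← prod_mul_distrib]
  rw [integral_fintype_prod_eq_prod (fun i a => (Q i).eval (x a) * x a ^ e i)]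
  exact prod_eq_zero (mem_univ i) (horth i (e i) hi)

theorem prod_eval_eq_sum_piFinset {ι R : Type*} [Fintype ι] [DecidableEq ι] [CommSemiring R]
    {Q : ι → R[X]} {d : ι → ℕ} (hdeg : ∀ i, (Q i).natDegree ≤ d i) (x : ι → R) :
    ∏ i, (Q i).eval (x i) =
      ∑ e ∈ Fintype.piFinset fun i => range (d i + 1),
        (∏ i, (Q i).coeff (e i)) * ∏ i, x i ^ e i := by
  simp_rw [fun i => eval_eq_sum_range' (Nat.lt_succ_of_le (hdeg i)) (x i), prod_univ_sum,
    prod_mul_distrib]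

theorem prod_pow_sub_prod_eval_eq_sum {ι R : Type*} [Fintype ι] [DecidableEq ι] [CommRing R]
    {Q : ι → R[X]} {d : ι → ℕ} (hmonic : ∀ i, (Q i).Monic) (hdeg : ∀ i, (Q i).natDegree = d i)
    (x : ι → R) :
    ∏ i, x i ^ d i - ∏ i, (Q i).eval (x i) =
      ∑ e ∈ (Fintype.piFinset fun i => range (d i + 1)).erase d,
        -(∏ i, (Q i).coeff (e i)) * ∏ i, x i ^ e i := by
  have hd_mem : d ∈ Fintype.piFinset fun i => range (d i + 1) := by
    simp [Fintype.mem_piFinset]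
  have hlead : ∏ i, (Q i).coeff (d i) = 1 :=
    prod_eq_one fun i _ => hdeg i ▸ (hmonic i).coeff_natDegree
  rw [prod_eval_eq_sum_piFinset (fun i => (hdeg i).le), ← add_sum_erase _ _ hd_mem, hlead]
  simp only [neg_mul, sum_neg_distrib]
  ring

theorem sum_lt_sum_of_mem_erase_piFinset {ι : Type*} [Fintype ι] [DecidableEq ι]
    {d e : ι → ℕ} (he : e ∈ (Fintype.piFinset fun i => range (d i + 1)).erase d) :
    ∑ i, e i < ∑ i, d i := by
  obtain ⟨hne, he⟩ := mem_erase.mp he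
  have hle : e ≤ d := fun i => Nat.lt_succ_iff.mp (mem_range.mp (Fintype.mem_piFinset.mp he i))
  exact Fintype.sum_strictMono (lt_of_le_of_ne hle hne)

theorem prod_pow_sub_prod_eval_mem_span_lower_monomials {ι α : Type*} [Fintype ι]
    (x : α → ℝ) {Q : ι → ℝ[X]} {d : ι → ℕ} (hmonic : ∀ i, (Q i).Monic)
    (hdeg : ∀ i, (Q i).natDegree = d i) :
    (fun η : ι → α => ∏ i, x (η i) ^ d i - ∏ i, (Q i).eval (x (η i))) ∈
      Submodule.span ℝ {F : (ι → α) → ℝ | ∃ e : ι → ℕ,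
        ∑ i, e i < ∑ i, d i ∧ F = fun η => ∏ i, x (η i) ^ e i} := by
  classical
  have hexpand : (fun η : ι → α => ∏ i, x (η i) ^ d i - ∏ i, (Q i).eval (x (η i))) =
      ∑ e ∈ (Fintype.piFinset fun i => range (d i + 1)).erase d,
        (-∏ i, (Q i).coeff (e i)) • fun η : ι → α => ∏ i, x (η i) ^ e i := by
    funext η
    rw [prod_pow_sub_prod_eval_eq_sum hmonic hdeg (fun i => x (η i)), Finset.sum_apply]
    simp only [Pi.smul_apply, smul_eq_mul]
  rw [hexpand]
  exact Submodule.sum_mem _ fun e he =>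
    Submodule.smul_mem _ _ (Submodule.subset_span ⟨e, sum_lt_sum_of_mem_erase_piFinset he, rfl⟩)

theorem stmt17_general (N n : ℕ) (μ : Fin N → Measure ℕ) [∀ i, IsProbabilityMeasure (μ i)]
    (d : Fin N → ℕ) (hd : ∑ i, d i = n)
    (Q : Fin N → Polynomial ℝ)
    (hmonic : ∀ i, (Q i).Monic) (hdeg : ∀ i, (Q i).natDegree = d i)
    (horth : ∀ i j, j < d i → ∫ ℓ : ℕ, (Q i).eval (ℓ : ℝ) * (ℓ : ℝ) ^ j ∂(μ i) = 0) :
    (∀ e : Fin N → ℕ, (∑ i, e i) < n →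
        ∫ η : Fin N → ℕ, (∏ i, (Q i).eval ((η i : ℝ))) * ∏ i, (η i : ℝ) ^ (e i)
          ∂(Measure.pi μ) = 0)
      ∧ (fun η : Fin N → ℕ =>
            (∏ i, (η i : ℝ) ^ (d i)) - ∏ i, (Q i).eval ((η i : ℝ)))
          ∈ Submodule.span ℝ
              {F : (Fin N → ℕ) → ℝ | ∃ e : Fin N → ℕ,
                (∑ i, e i) < n ∧ F = fun η => ∏ i, (η i : ℝ) ^ (e i)} := by
  subst hd
  exact ⟨fun e he => integral_pi_prod_eval_mul_prod_pow_eq_zero _ horth he,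
    prod_pow_sub_prod_eval_mem_span_lower_monomials _ hmonic hdeg⟩

/-- let `μ = ⊗_i μ_i` be a completely independent (product) probability measure
on `ℕ^E` with `E = {A_1,…,A_N}` finite and all moments finite, and let `d_i` be given with
`∑ d_i = n`. For each coordinate let `Q i` be the single-variable orthogonal projection of
`η_{A_i} ↦ η_{A_i}^{d_i}` onto the complement of polynomials of degree `≤ d_i - 1` in
`L²(μ_i)`, i.e. the monic polynomial of degree `d_i` orthogonal to all lower degrees. Then the
orthogonal projection in `L²(μ)` of the monomial `η ↦ ∏_i η_{A_i}^{d_i}` onto the complement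
of polynomials of degree `≤ n-1` factorizes as the product `η ↦ ∏_i Q_i(η_{A_i})`:
equivalently, this product is orthogonal to all monomials of total degree `< n` and differs
from the monomial by a linear combination of monomials of total degree `< n`. -/
theorem stmt17 (N n : ℕ) (μ : Fin N → Measure ℕ) [∀ i, IsProbabilityMeasure (μ i)]
    (hmom : ∀ i k, Integrable (fun ℓ : ℕ => (ℓ : ℝ) ^ k) (μ i))
    (d : Fin N → ℕ) (hd : ∑ i, d i = n)
    (Q : Fin N → Polynomial ℝ)
    (hmonic : ∀ i, (Q i).Monic) (hdeg : ∀ i, (Q i).natDegree = d i)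
    (horth : ∀ i j, j < d i → ∫ ℓ : ℕ, (Q i).eval (ℓ : ℝ) * (ℓ : ℝ) ^ j ∂(μ i) = 0) :
    (∀ e : Fin N → ℕ, (∑ i, e i) < n →
        ∫ η : Fin N → ℕ, (∏ i, (Q i).eval ((η i : ℝ))) * ∏ i, (η i : ℝ) ^ (e i)
          ∂(Measure.pi μ) = 0)
      ∧ (fun η : Fin N → ℕ =>
            (∏ i, (η i : ℝ) ^ (d i)) - ∏ i, (Q i).eval ((η i : ℝ)))
          ∈ Submodule.span ℝ
              {F : (Fin N → ℕ) → ℝ | ∃ e : Fin N → ℕ,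
                (∑ i, e i) < n ∧ F = fun η => ∏ i, (η i : ℝ) ^ (e i)} :=
  stmt17_general N n μ d hd Q hmonic hdeg horth
end
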